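/- Let g ≥ 2 be an integer, r a positive integer and d' an integer with gcd(r,d') = 1. Define F(t) = (1−t) · P^{ℝ,0}_{g}(r,d')(t) for real t > 0 with t ≠ 1. Then for all such t one has t^{r²(g−1)+1} · F(1/t) = F(t). -/

import Mathlib

/-!
Reversing compositions `(r₁,…,r_l) ↦ (r_l,…,r₁)` matches the terms of `P(1/t)` with those of
`P(t)`. Under `t ↦ 1/t` every block factor becomes `-t^{-(g-1)rᵢ²}` times itself and the
adjacency product `∏(1 - t^{2(rᵢ+r_{i+1})})` becomes `(-1)^{l-1} t^{-2A}` times itself, with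
`A = Σ (rᵢ + r_{i+1})`. Since `gcd(r,d) = 1`, no proper partial sum `σ` makes `σd/r` an integer,
so `⟨(r-σ)d/r⟩ = 1 - ⟨σd/r⟩` and the exponent `M` of the reversed composition is `A - M`.
Finally `r² = Σ rᵢ² + 2 Σ_{i<j} rᵢ r_j` collects all powers of `t` into `t^{-r²(g-1)}`, and the
signs multiply to `-1`. Hence `P(1/t) = -t^{-r²(g-1)} P(t)`, and the factor `1 - t` absorbs the
remaining `t`.
-/

open Finset

noncomputable section

/-- `ang x` is `⟨x⟩ = ⌊x⌋ + 1 - x`, the unique element of `(0,1]` with `x + ⟨x⟩ ∈ ℤ`. -/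
def ang (x : ℝ) : ℝ := (⌊x⌋ : ℝ) + 1 - x

/-- `M(r₁,…,r_l; λ) = Σ_{i=1}^{l-1} (r_i + r_{i+1}) · ⟨(r₁+⋯+r_i)·λ⟩` for `L = [r₁,…,r_l]`. -/
def Mfun (L : List ℕ) (lam : ℝ) : ℝ :=
  ∑ i ∈ Finset.range (L.length - 1),
    ((L.getD i 0 : ℝ) + (L.getD (i+1) 0 : ℝ)) * ang (((L.take (i+1)).sum : ℝ) * lam)

/-- `∏_{i=1}^{l-1} (1 - x^{m·(r_i + r_{i+1})})`. -/
def adjProd (x : ℝ) (m : ℕ) (L : List ℕ) : ℝ :=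
  ∏ i ∈ Finset.range (L.length - 1), (1 - x ^ (m * (L.getD i 0 + L.getD (i+1) 0)))

/-- `Σ_{1 ≤ i < j ≤ l} r_i r_j`. -/
def pairSum (L : List ℕ) : ℝ :=
  ∑ i ∈ Finset.range L.length, ∑ j ∈ Finset.Ico (i+1) L.length,
    (L.getD i 0 : ℝ) * (L.getD j 0 : ℝ)

/-- The block factor `∏_{j=1}^{rᵢ}(1+t^{2j-1})^{g+1} / (∏_{j=1}^{rᵢ-1}(1-t^{2j}) ∏_{j=1}^{rᵢ}(1-t^{2j}))`. -/
def blockR0 (g : ℕ) (t : ℝ) (ri : ℕ) : ℝ :=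
  (∏ j ∈ Finset.range ri, (1 + t ^ (2*j+1)) ^ (g+1)) /
  ((∏ j ∈ Finset.range (ri - 1), (1 - t ^ (2*j+2))) * ∏ j ∈ Finset.range ri, (1 - t ^ (2*j+2)))

/-- The closed formula `P^{ℝ,0}_g(r,d)(t)` (real bundles, no real points). -/
def PR0 (g r : ℕ) (d : ℤ) (t : ℝ) : ℝ :=
  ∑ c : Composition r,
    (-1 : ℝ) ^ (c.length - 1) *
    (t ^ (2 * Mfun c.blocks ((d : ℝ) / (r : ℝ))) / adjProd t 2 c.blocks) *
    t ^ (((g : ℝ) - 1) * pairSum c.blocks) *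
    (c.blocks.map (blockR0 g t)).prod

lemma ang_eq_one_sub_fract (x : ℝ) : ang x = 1 - Int.fract x := by
  unfold ang Int.fract
  ring

lemma ang_intCast_sub (n : ℤ) {x : ℝ} (hx : Int.fract x ≠ 0) : ang (n - x) = 1 - ang x := by
  have hfract : Int.fract ((n : ℝ) - x) = Int.fract (-x) := by
    rw [sub_eq_neg_add, Int.fract_add_intCast]
  rw [ang_eq_one_sub_fract, ang_eq_one_sub_fract, hfract, Int.fract_neg hx]

lemma fract_mul_div_ne_zero_of_gcd_eq_one {r σ : ℕ} {d : ℤ} (hcop : Int.gcd r d = 1)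
    (hσ0 : 0 < σ) (hσr : σ < r) : Int.fract ((σ : ℝ) * (d / r)) ≠ 0 := by
  rw [Ne, Int.fract_eq_zero_iff]
  rintro ⟨n, hn⟩
  have hr : (r : ℝ) ≠ 0 := by exact_mod_cast (hσ0.trans hσr).ne'
  have hdvd : (r : ℤ) ∣ σ * d := ⟨n, by
    have : ((σ * d : ℤ) : ℝ) = ((r * n : ℤ) : ℝ) := by
      push_cast
      field_simp at hn
      linarith
    exact_mod_cast this⟩
  have := Int.le_of_dvd (by exact_mod_cast hσ0) (Int.dvd_of_dvd_mul_left_of_gcd_one hdvd hcop)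
  omega

lemma sum_range_length_getD {M : Type*} [AddCommMonoid M] (f : ℕ → M) (L : List ℕ) :
    ∑ i ∈ range L.length, f (L.getD i 0) = (L.map f).sum := by
  induction L with
  | nil => simp
  | cons a L ih =>
    simp only [List.length_cons, Finset.sum_range_succ', List.getD_cons_succ,
      List.getD_cons_zero, ih, List.map_cons, List.sum_cons, add_comm]

lemma sq_sum_range_eq {R : Type*} [CommRing R] (f : ℕ → R) (n : ℕ) :
    (∑ i ∈ range n, f i) ^ 2 =
      ∑ i ∈ range n, f i ^ 2 + 2 * ∑ i ∈ range n, ∑ j ∈ Ico (i + 1) n, f i * f j := by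
  induction n with
  | zero => simp
  | succ n ih =>
    have hsplit : ∀ i ∈ range n, ∑ j ∈ Ico (i + 1) (n + 1), f i * f j =
        ∑ j ∈ Ico (i + 1) n, f i * f j + f i * f n := fun i hi =>
      Finset.sum_Ico_succ_top (by simpa using hi) _
    rw [Finset.sum_range_succ, Finset.sum_range_succ, Finset.sum_range_succ,
      Finset.sum_congr rfl hsplit, Finset.sum_add_distrib, ← Finset.sum_mul]
    simp only [Ico_self, sum_empty, add_zero]
    linear_combination ih

lemma sq_sum_eq_sum_sq_add_two_mul_pairSum (L : List ℕ) :
    (L.sum : ℝ) ^ 2 = (L.map (fun n : ℕ => (n : ℝ) ^ 2)).sum + 2 * pairSum L := by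
  have h := sq_sum_range_eq (fun i => (L.getD i 0 : ℝ)) L.length
  rw [sum_range_length_getD (fun n : ℕ => (n : ℝ)),
    sum_range_length_getD (fun n : ℕ => (n : ℝ) ^ 2)] at h
  rw [Nat.cast_list_sum, h, pairSum]

lemma pairSum_reverse (L : List ℕ) : pairSum L.reverse = pairSum L := by
  have h := sq_sum_eq_sum_sq_add_two_mul_pairSum L
  have hrev := sq_sum_eq_sum_sq_add_two_mul_pairSum L.reverse
  rw [List.sum_reverse, List.map_reverse, List.sum_reverse] at hrev
  linarith

lemma adjProd_reverse (t : ℝ) (m : ℕ) (L : List ℕ) : adjProd t m L.reverse = adjProd t m L := by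
  unfold adjProd
  rw [List.length_reverse, ← Finset.prod_range_reflect]
  refine Finset.prod_congr rfl fun i hi => ?_
  have hi : i < L.length - 1 := Finset.mem_range.mp hi
  rw [List.getD_reverse _ (by omega), List.getD_reverse _ (by omega),
    show L.length - 1 - (L.length - 1 - 1 - i) = i + 1 by omega,
    show L.length - 1 - (L.length - 1 - 1 - i + 1) = i by omega, Nat.add_comm (L.getD (i + 1) 0)]

def adjSum (L : List ℕ) : ℕ :=
  ∑ i ∈ range (L.length - 1), (L.getD i 0 + L.getD (i + 1) 0)

lemma sum_take_reverse (L : List ℕ) (k : ℕ) :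
    ((L.reverse.take k).sum : ℝ) = L.sum - (L.take (L.length - k)).sum := by
  have hdrop : (L.reverse.take k).sum = (L.drop (L.length - k)).sum := by
    rw [← List.sum_reverse, List.reverse_take, List.reverse_reverse, List.length_reverse]
  rw [hdrop, eq_sub_iff_add_eq, ← Nat.cast_add, add_comm, List.sum_take_add_sum_drop]

lemma Mfun_reverse {r : ℕ} {d : ℤ} (hcop : Int.gcd r d = 1) {L : List ℕ}
    (hL : ∀ x ∈ L, 0 < x) (hsum : L.sum = r) :
    Mfun L.reverse (d / r) = adjSum L - Mfun L (d / r) := by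
  unfold Mfun adjSum
  rw [List.length_reverse, ← Finset.sum_range_reflect, Nat.cast_sum, ← Finset.sum_sub_distrib]
  refine Finset.sum_congr rfl fun i hi => ?_
  have hi : i < L.length - 1 := Finset.mem_range.mp hi
  have hpos : 0 < (L.take (i + 1)).sum :=
    List.sum_pos _ (fun x hx => hL x (List.mem_of_mem_take hx))
      (List.ne_nil_of_length_pos (by simp; omega))
  have hlt : (L.take (i + 1)).sum < r := by
    have hdrop : 0 < (L.drop (i + 1)).sum :=
      List.sum_pos _ (fun x hx => hL x (List.mem_of_mem_drop hx))
        (List.ne_nil_of_length_pos (by simp; omega))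
    have := List.sum_take_add_sum_drop L (i + 1)
    omega
  rw [List.getD_reverse _ (by omega), List.getD_reverse _ (by omega),
    show L.length - 1 - (L.length - 1 - 1 - i) = i + 1 by omega,
    show L.length - 1 - (L.length - 1 - 1 - i + 1) = i by omega,
    sum_take_reverse L, show L.length - (L.length - 1 - 1 - i + 1) = i + 1 by omega,
    hsum]
  have hr : (r : ℝ) ≠ 0 := by exact_mod_cast (hpos.trans hlt).ne'
  have harg : ((r : ℝ) - ((L.take (i + 1)).sum : ℕ)) * (d / r) =
      d - ((L.take (i + 1)).sum : ℕ) * (d / r) := by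
    field_simp
  rw [harg, ang_intCast_sub _ (fract_mul_div_ne_zero_of_gcd_eq_one hcop hpos hlt)]
  push_cast
  ring

lemma prod_one_add_inv_pow {ι K : Type*} [Field K] {t : K} (ht : t ≠ 0) (s : Finset ι)
    (e : ι → ℕ) : ∏ i ∈ s, (1 + t⁻¹ ^ e i) = (∏ i ∈ s, (1 + t ^ e i)) / t ^ ∑ i ∈ s, e i := by
  rw [← Finset.prod_pow_eq_pow_sum, ← Finset.prod_div_distrib]
  refine Finset.prod_congr rfl fun i _ => ?_
  rw [inv_pow]
  field_simp
  ring

lemma prod_one_sub_inv_pow {ι K : Type*} [Field K] {t : K} (ht : t ≠ 0) (s : Finset ι)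
    (e : ι → ℕ) :
    ∏ i ∈ s, (1 - t⁻¹ ^ e i) = (-1) ^ s.card * (∏ i ∈ s, (1 - t ^ e i)) / t ^ ∑ i ∈ s, e i := by
  rw [← Finset.prod_pow_eq_pow_sum, ← Finset.prod_const, ← Finset.prod_mul_distrib,
    ← Finset.prod_div_distrib]
  refine Finset.prod_congr rfl fun i _ => ?_
  rw [inv_pow]
  field_simp
  ring

lemma adjProd_inv {t : ℝ} (ht : t ≠ 0) (m : ℕ) (L : List ℕ) :
    adjProd t⁻¹ m L = (-1) ^ (L.length - 1) * adjProd t m L / t ^ (m * adjSum L) := by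
  rw [adjProd, prod_one_sub_inv_pow ht, ← Finset.mul_sum, Finset.card_range, adjSum, adjProd]

lemma sum_range_two_mul_add_one (n : ℕ) : ∑ j ∈ range n, (2 * j + 1) = n ^ 2 := by
  induction n with
  | zero => simp
  | succ n ih => rw [Finset.sum_range_succ, ih]; ring

lemma sum_range_two_mul_add_two (n : ℕ) : ∑ j ∈ range n, (2 * j + 2) = n * (n + 1) := by
  induction n with
  | zero => simp
  | succ n ih => rw [Finset.sum_range_succ, ih]; ring

lemma blockR0_inv (g : ℕ) {t : ℝ} (ht : 0 < t) {n : ℕ} (hn : 0 < n) :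
    blockR0 g t⁻¹ n = -(t ^ (-(((g : ℝ) - 1) * n ^ 2)) * blockR0 g t n) := by
  obtain ⟨m, rfl⟩ : ∃ m, n = m + 1 := ⟨n - 1, by omega⟩
  have hsign : (-1 : ℝ) ^ m * (-1) ^ (m + 1) = -1 := by
    rw [← pow_add]
    exact Odd.neg_one_pow ⟨m, by ring⟩
  have hdeg : t ^ (m * (m + 1)) * t ^ ((m + 1) * (m + 1 + 1)) = (t ^ (m + 1) ^ 2) ^ 2 := by
    rw [← pow_add, ← pow_mul]
    ring_nf
  have hrpow : (t ^ (m + 1) ^ 2) ^ 2 / (t ^ (m + 1) ^ 2) ^ (g + 1) =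
      t ^ (-(((g : ℝ) - 1) * ((m + 1 : ℕ) : ℝ) ^ 2)) := by
    rw [← pow_mul, ← pow_mul, ← Real.rpow_natCast, ← Real.rpow_natCast, ← Real.rpow_sub ht]
    congr 1
    push_cast
    ring
  unfold blockR0
  rw [Finset.prod_pow, Finset.prod_pow, prod_one_add_inv_pow ht.ne',
    prod_one_sub_inv_pow ht.ne', prod_one_sub_inv_pow ht.ne', sum_range_two_mul_add_one,
    sum_range_two_mul_add_two, sum_range_two_mul_add_two, Finset.card_range, Finset.card_range,
    Nat.add_sub_cancel, ← hrpow]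
  rw [show ∀ s₁ s₂ D₁ D₂ T₁ T₂ : ℝ, s₁ * D₁ / T₁ * (s₂ * D₂ / T₂) = s₁ * s₂ * (D₁ * D₂) / (T₁ * T₂)
    from fun _ _ _ _ _ _ => by ring, hsign, hdeg, div_div_eq_mul_div]
  ring

lemma prod_map_blockR0_inv (g : ℕ) {t : ℝ} (ht : 0 < t) {L : List ℕ} (hL : ∀ x ∈ L, 0 < x) :
    (L.map (blockR0 g t⁻¹)).prod = (-1) ^ L.length *
      t ^ (-(((g : ℝ) - 1) * (L.map (fun n : ℕ => (n : ℝ) ^ 2)).sum)) *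
        (L.map (blockR0 g t)).prod := by
  induction L with
  | nil => simp
  | cons a L ih =>
    simp only [List.forall_mem_cons] at hL
    rw [List.map_cons, List.prod_cons, ih hL.2, blockR0_inv g ht hL.1, List.map_cons,
      List.sum_cons, List.map_cons, List.prod_cons, List.length_cons, mul_add, neg_add,
      Real.rpow_add ht, pow_succ]
    ring

def compTerm (g : ℕ) (lam t : ℝ) (L : List ℕ) : ℝ :=
  (-1 : ℝ) ^ (L.length - 1) * (t ^ (2 * Mfun L lam) / adjProd t 2 L) *
    t ^ (((g : ℝ) - 1) * pairSum L) * (L.map (blockR0 g t)).prod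

lemma PR0_eq_sum_compTerm (g r : ℕ) (d : ℤ) (t : ℝ) :
    PR0 g r d t = ∑ c : Composition r, compTerm g (d / r) t c.blocks :=
  rfl

lemma compTerm_inv (g : ℕ) {lam t : ℝ} (ht : 0 < t) {L : List ℕ} (hL : ∀ x ∈ L, 0 < x)
    (hne : L ≠ []) (hM : Mfun L.reverse lam = adjSum L - Mfun L lam) :
    compTerm g lam t⁻¹ L =
      -(t ^ (-(((g : ℝ) - 1) * (L.sum : ℝ) ^ 2)) * compTerm g lam t L.reverse) := by
  obtain ⟨k, hk⟩ : ∃ k, L.length = k + 1 :=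
    ⟨L.length - 1, by have := List.length_pos_iff.mpr hne; omega⟩
  set Q := (L.map (fun n : ℕ => (n : ℝ) ^ 2)).sum
  have hpow : (t ^ (2 * Mfun L lam))⁻¹ * t ^ (2 * adjSum L) *
      (t ^ (((g : ℝ) - 1) * pairSum L))⁻¹ * t ^ (-(((g : ℝ) - 1) * Q)) =
      t ^ (-(((g : ℝ) - 1) * (Q + 2 * pairSum L))) * t ^ (2 * (adjSum L - Mfun L lam)) *
        t ^ (((g : ℝ) - 1) * pairSum L) := by
    rw [← Real.rpow_neg ht.le, ← Real.rpow_neg ht.le, ← Real.rpow_natCast, ← Real.rpow_add ht,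
      ← Real.rpow_add ht, ← Real.rpow_add ht, ← Real.rpow_add ht, ← Real.rpow_add ht]
    congr 1
    push_cast
    ring
  unfold compTerm
  rw [adjProd_inv ht.ne', prod_map_blockR0_inv g ht hL, Real.inv_rpow ht.le,
    Real.inv_rpow ht.le, List.length_reverse, hM, adjProd_reverse, pairSum_reverse,
    List.map_reverse, List.prod_reverse, sq_sum_eq_sum_sq_add_two_mul_pairSum, hk,
    Nat.add_sub_cancel, pow_succ, mul_div_assoc _ (adjProd t 2 L), ← mul_div_assoc,
    mul_div_mul_left _ _ (pow_ne_zero k (neg_ne_zero.mpr one_ne_zero)), div_div_eq_mul_div]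
  linear_combination (-((-1) ^ k * (L.map (blockR0 g t)).prod / adjProd t 2 L)) * hpow

lemma PR0_inv (g : ℕ) {r : ℕ} (hr : 0 < r) {d : ℤ} (hcop : Int.gcd r d = 1) {t : ℝ}
    (ht : 0 < t) :
    PR0 g r d t⁻¹ = -(t ^ (-(((g : ℝ) - 1) * (r : ℝ) ^ 2)) * PR0 g r d t) := by
  rw [PR0_eq_sum_compTerm, PR0_eq_sum_compTerm,
    ← Equiv.sum_comp (Composition.reverse_involutive.toPerm _)
      (fun c : Composition r => compTerm g (d / r) t c.blocks), Finset.mul_sum,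
    ← Finset.sum_neg_distrib]
  refine Finset.sum_congr rfl fun c _ => ?_
  have hne : c.blocks ≠ [] := List.length_pos_iff.mp (c.length_pos_of_pos hr)
  rw [compTerm_inv g ht (fun _ => c.blocks_pos) hne
    (Mfun_reverse hcop (fun _ => c.blocks_pos) c.blocks_sum),
    c.blocks_sum]
  rfl

theorem stmt4_general (g r : ℕ) (hr : 0 < r)
    (d' : ℤ) (hcop : Int.gcd (r : ℤ) d' = 1)
    (t : ℝ) (ht : 0 < t) :
    t ^ ((r : ℝ)^2 * ((g : ℝ) - 1) + 1) * ((1 - 1/t) * PR0 g r d' (1/t)) =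
      (1 - t) * PR0 g r d' t := by
  rw [one_div, PR0_inv g hr hcop ht, Real.rpow_add ht, Real.rpow_one,
    show -(((g : ℝ) - 1) * (r : ℝ) ^ 2) = -((r : ℝ) ^ 2 * ((g : ℝ) - 1)) by ring,
    Real.rpow_neg ht.le]
  have hpow : t ^ ((r : ℝ) ^ 2 * ((g : ℝ) - 1)) ≠ 0 := (Real.rpow_pos_of_pos ht _).ne'
  field_simp
  ring

/-- Strange Poincaré duality for `(1-t)·P^{ℝ,0}_g(r,d')`
(Theorem `strange_Poincare_duality_no_real_points` (1)). -/
theorem stmt4 (g r : ℕ) (hg : 2 ≤ g) (hr : 0 < r)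
    (d' : ℤ) (hcop : Int.gcd (r : ℤ) d' = 1)
    (t : ℝ) (ht : 0 < t) (ht1 : t ≠ 1) :
    t ^ ((r : ℝ)^2 * ((g : ℝ) - 1) + 1) * ((1 - 1/t) * PR0 g r d' (1/t)) =
      (1 - t) * PR0 g r d' t :=
  stmt4_general g r hr d' hcop t ht

end
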